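/- arXiv:2106.01878 — 5 statements merged into one kernel-verified Lean document; each statement's English description precedes it below -/
import Mathlib

section
/- For a cartesian closed category C and an object γ, the assignment E₀(a) = (a, ev_{γ,a}, γ^a) and E₁(f : a → b) = (f, f⁻), where f⁻ : γ^b → γ^a is the transpose of ev_{γ,b} ∘ (f × 1_{γ^b}), defines a full and faithful functor from C into Chu(C, γ) that is injective on objects and on arrows. -/
open CategoryTheory CategoryTheory.Limits MonoidalCategory

universe v u

variable (C : Type u) [Category.{v} C] [CartesianMonoidalCategory C] [MonoidalClosed C]

/-- A Chu space over the ccc `C` and the object `γ`. -/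
structure ChuObj (γ : C) : Type (max u v) where
  a : C
  x : C
  f : a ⊗ x ⟶ γ

variable {C}

/-- A Chu transform. -/
@[ext]
structure ChuHom {γ : C} (A B : ChuObj C γ) : Type v where
  plus : A.a ⟶ B.a
  minus : B.x ⟶ A.x
  comm : (𝟙 A.a ⊗ₘ minus) ≫ A.f = (plus ⊗ₘ 𝟙 B.x) ≫ B.f

/-- The Chu category `Chu(C, γ)`. -/
instance chuCategory {γ : C} : Category (ChuObj C γ) where
  Hom := ChuHom
  id A := ⟨𝟙 A.a, 𝟙 A.x, rfl⟩
  comp φ θ := ⟨φ.plus ≫ θ.plus, θ.minus ≫ φ.minus, by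
    calc (𝟙 _ ⊗ₘ θ.minus ≫ φ.minus) ≫ _
        = (𝟙 _ ⊗ₘ θ.minus) ≫ (𝟙 _ ⊗ₘ φ.minus) ≫ _ := by
          rw [← Category.assoc, MonoidalCategory.tensorHom_comp_tensorHom, Category.comp_id]
      _ = (𝟙 _ ⊗ₘ θ.minus) ≫ (φ.plus ⊗ₘ 𝟙 _) ≫ _ := by rw [φ.comm]
      _ = (φ.plus ⊗ₘ 𝟙 _) ≫ (𝟙 _ ⊗ₘ θ.minus) ≫ _ := by
          rw [← Category.assoc, ← Category.assoc, MonoidalCategory.tensorHom_comp_tensorHom,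
            MonoidalCategory.tensorHom_comp_tensorHom, Category.id_comp, Category.comp_id,
            Category.id_comp, Category.comp_id]
      _ = (φ.plus ⊗ₘ 𝟙 _) ≫ (θ.plus ⊗ₘ 𝟙 _) ≫ _ := by rw [θ.comm]
      _ = ((φ.plus ≫ θ.plus) ⊗ₘ 𝟙 _) ≫ _ := by
          rw [← Category.assoc, MonoidalCategory.tensorHom_comp_tensorHom, Category.comp_id]⟩
  id_comp φ := ChuHom.ext (Category.id_comp _) (Category.comp_id _)
  comp_id φ := ChuHom.ext (Category.comp_id _) (Category.id_comp _)
  assoc φ θ ρ := ChuHom.ext (Category.assoc _ _ _) (Category.assoc _ _ _).symm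

variable {γ : C}

/-- Object part of the Chu representation of the ccc `C`:
`E₀(a) = (a, ev_{γ,a}, γ^a)`. -/
noncomputable def repObj (γ : C) (a : C) : ChuObj C γ :=
  ⟨a, (ihom a).obj γ, (ihom.ev a).app γ⟩

/-- Morphism part: `E₁(f) = (f, f⁻)` where `f⁻ : γ^b → γ^a` is the transpose of
`ev_{γ,b} ∘ (f × 1_{γ^b})`. -/
noncomputable def repHom {a b : C} (f : a ⟶ b) : repObj γ a ⟶ repObj γ b :=
  ⟨f, MonoidalClosed.curry ((f ⊗ₘ 𝟙 ((ihom b).obj γ)) ≫ (ihom.ev b).app γ), by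
    show (𝟙 a ⊗ₘ _) ≫ (ihom.ev a).app γ = _
    rw [MonoidalCategory.id_tensorHom, ← MonoidalClosed.uncurry_eq,
      MonoidalClosed.uncurry_curry]
    rfl⟩

/-
Between the objects `repObj γ a` the compatibility condition of a Chu transform says
exactly that the backward component is the transpose of `ev ∘ (plus × 1)`. So a Chu
transform is determined by its forward component, and every forward component occurs.
-/

theorem ChuHom.minus_eq_curry_of_repObj {a b : C} (φ : repObj γ a ⟶ repObj γ b) :
    φ.minus = MonoidalClosed.curry ((φ.plus ⊗ₘ 𝟙 ((ihom b).obj γ)) ≫ (ihom.ev b).app γ) := by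
  refine (MonoidalClosed.eq_curry_iff _ _).2 ?_
  have h := φ.comm
  rw [id_tensorHom] at h
  exact (MonoidalClosed.uncurry_eq _).trans h

theorem ChuHom.ext_of_repObj {a b : C} {φ ψ : repObj γ a ⟶ repObj γ b}
    (h : φ.plus = ψ.plus) : φ = ψ :=
  ChuHom.ext h (by rw [φ.minus_eq_curry_of_repObj, ψ.minus_eq_curry_of_repObj, h])

/-- the assignment `E₀(a) = (a, ev_{γ,a}, γ^a)`,
`E₁(f) = (f, f⁻)` defines a functor from `C` into `Chu(C, γ)` that is full
and faithful, and injective on objects and on arrows. -/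
theorem repHom_full_embedding (γ : C) :
    (∀ a : C, repHom (γ := γ) (𝟙 a) = 𝟙 (repObj γ a)) ∧
    (∀ {a b c : C} (f : a ⟶ b) (g : b ⟶ c),
      repHom (γ := γ) (f ≫ g) = repHom (γ := γ) f ≫ repHom (γ := γ) g) ∧
    Function.Injective (repObj (C := C) γ) ∧
    (∀ a b : C, Function.Injective fun f : a ⟶ b => repHom (γ := γ) f) ∧
    (∀ (a b : C) (φ : repObj γ a ⟶ repObj γ b), ∃ f : a ⟶ b, repHom (γ := γ) f = φ) :=
  ⟨fun _ => ChuHom.ext_of_repObj rfl,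
    fun _ _ => ChuHom.ext_of_repObj rfl,
    fun _ _ h => congrArg ChuObj.a h,
    fun _ _ _ _ h => congrArg ChuHom.plus h,
    fun _ _ φ => ⟨φ.plus, ChuHom.ext_of_repObj rfl⟩⟩
end

section
/- The functor from Top to Chu(Set, Bool), sending a topological space (X, T) to the Chu space (X, ∈, T) where ∈(x, G) = true iff x ∈ G, and a continuous map f : X → Y to the pair (f, f⁻¹ restricted to open sets), is a full and faithful functor injective on objects and arrows. -/
open CategoryTheory

universe u

/-- A Chu space over `Set` and a set `γ`: a triple `(A, f : A × B → γ, B)`. -/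
structure ChuSet (γ : Type u) : Type (u + 1) where
  A : Type u
  B : Type u
  f : A → B → γ

/-- A Chu transform `(A, f, B) → (C, g, D)`: a pair `(φ⁺ : A → C, φ⁻ : D → B)`
with `f(a, φ⁻ d) = g(φ⁺ a, d)` for all `a, d`. -/
@[ext]
structure ChuSetHom {γ : Type u} (P Q : ChuSet γ) : Type u where
  plus : P.A → Q.A
  minus : Q.B → P.B
  comm : ∀ a d, P.f a (minus d) = Q.f (plus a) d

/-- The Chu category `Chu(Set, γ)`. -/
instance {γ : Type u} : Category (ChuSet γ) where
  Hom := ChuSetHom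
  id P := ⟨id, id, fun _ _ => rfl⟩
  comp φ θ := ⟨θ.plus ∘ φ.plus, φ.minus ∘ θ.minus, fun a d => (φ.comm a _).trans (θ.comm _ d)⟩
  id_comp φ := ChuSetHom.ext rfl rfl
  comp_id φ := ChuSetHom.ext rfl rfl
  assoc φ θ ρ := ChuSetHom.ext rfl rfl

/-- Boolean membership `∈(x, G) = true iff x ∈ G`. -/
noncomputable def memB {X : Type} [TopologicalSpace X] (x : X)
    (U : {U : Set X // IsOpen U}) : Bool :=
  @decide (x ∈ U.1) (Classical.propDecidable _)

/-- The functor `Top → Chu(Set, Bool)`, `(X, T) ↦ (X, ∈, T)`,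
`f ↦ (f, f⁻¹)` (preimage restricted to open sets). -/
noncomputable def ETop : TopCat.{0} ⥤ ChuSet Bool where
  obj X := ⟨↥X, {U : Set ↥X // IsOpen U}, fun x U => memB x U⟩
  map {X Y} f :=
    ⟨⇑f, fun U => ⟨⇑f ⁻¹' U.1, U.2.preimage f.hom.continuous⟩, by
      intro x U
      simp [memB]⟩
  map_id X := ChuSetHom.ext rfl rfl
  map_comp f g := ChuSetHom.ext rfl rfl


private theorem heq_app {A B₁ B₂ : Type} (f : A → B₁ → Bool) (g : A → B₂ → Bool)
    (h : B₁ = B₂) (hf : HEq f g) (x : A) (U : B₁) : f x U = g x (cast h U) := by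
  subst h; rw [eq_of_heq hf]; rfl

private theorem topeq {α : Type} (t₁ t₂ : TopologicalSpace α)
    (hB : {U : Set α // @IsOpen α t₁ U} = {U : Set α // @IsOpen α t₂ U})
    (hf : HEq (fun (x : α) (U : {U : Set α // @IsOpen α t₁ U}) => @memB α t₁ x U)
              (fun (x : α) (U : {U : Set α // @IsOpen α t₂ U}) => @memB α t₂ x U)) :
    t₁ = t₂ := by
  have key : ∀ (x : α) U, @memB α t₁ x U = @memB α t₂ x (cast hB U) :=
    fun x U => heq_app _ _ hB hf x U
  have hset : ∀ U, (cast hB U).1 = U.1 := by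
    intro U
    ext x
    have h0 := key x U
    simp only [memB] at h0
    exact (decide_eq_decide.mp h0).symm
  apply TopologicalSpace.ext
  ext U
  constructor
  · intro hU
    have h1 := (cast hB ⟨U, hU⟩ : {U : Set α // @IsOpen α t₂ U}).2
    have h2 : (cast hB (⟨U, hU⟩ : {U : Set α // @IsOpen α t₁ U})).1 = U := hset ⟨U, hU⟩
    rw [← h2]
    exact h1
  · intro hU
    have h2 : (cast hB (cast hB.symm (⟨U, hU⟩ : {U : Set α // @IsOpen α t₂ U}))).1 = U := by
      rw [cast_cast, cast_eq]
    have hVU : (cast hB.symm (⟨U, hU⟩ : {U : Set α // @IsOpen α t₂ U})).1 = U :=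
      (hset _).symm.trans h2
    rw [← hVU]
    exact (cast hB.symm (⟨U, hU⟩ : {U : Set α // @IsOpen α t₂ U})).2

/-- the functor `Top → Chu(Set, Bool)` sending `(X, T)` to the Chu
space `(X, ∈, T)` and a continuous `f` to `(f, f⁻¹)` is full, faithful, and
injective on objects and on arrows. -/
theorem ETop_full_embedding :
    ETop.Full ∧ ETop.Faithful ∧ Function.Injective ETop.obj ∧
      (∀ X Y : TopCat.{0}, Function.Injective fun f : X ⟶ Y => ETop.map f) := by
  refine ⟨⟨?_⟩, ⟨?_⟩, ?_, ?_⟩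
  · -- full
    intro X Y φ
    have hc : Continuous (X := ↥X) (Y := ↥Y) φ.plus := by
      refine continuous_def.mpr ?_
      intro U hU
      have : φ.plus ⁻¹' U = (φ.minus ⟨U, hU⟩).1 := by
        ext x
        have := φ.comm x ⟨U, hU⟩
        simp only [ETop, memB] at this
        have := decide_eq_decide.mp this
        exact this.symm
      refine (congrArg (IsOpen (X := ↥X)) this).mpr ?_
      exact (φ.minus ⟨U, hU⟩).2
    refine ⟨TopCat.ofHom ⟨φ.plus, hc⟩, ?_⟩
    refine ChuSetHom.ext rfl ?_
    funext U
    apply Subtype.ext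
    ext x
    have := φ.comm x U
    simp only [ETop, memB] at this
    have := decide_eq_decide.mp this
    exact this.symm
  · -- faithful
    intro X Y f g h
    have h1 : (ETop.map f).plus = (ETop.map g).plus := congrArg ChuSetHom.plus h
    simp only [ETop] at h1
    exact TopCat.hom_ext (ContinuousMap.ext fun x => congrFun h1 x)
  · -- injective on objects
    intro X Y h
    obtain @⟨α, t₁⟩ := X
    obtain @⟨β, t₂⟩ := Y
    simp only [ETop] at h
    injection h with hA hB hf
    subst hA
    have : t₁ = t₂ := topeq t₁ t₂ hB hf
    rw [this]
  · -- injective on arrows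
    intro X Y f g h
    have h1 : (ETop.map f).plus = (ETop.map g).plus := congrArg ChuSetHom.plus h
    simp only [ETop] at h1
    exact TopCat.hom_ext (ContinuousMap.ext fun x => congrFun h1 x)
end

section
/- The functor from the category Bis of Bishop spaces to Chu(Set, ℝ), which sends (X, F) to (X, ev_{X,F}, F) with ev_{X,F}(x, f) = f(x), and a Bishop morphism h : (X, F) → (Y, G) to (h, h*) where h*(g) = g ∘ h, is a full and faithful functor injective on objects and arrows. -/
open CategoryTheory

universe u

/-- Bishop continuity: uniform continuity on every interval `[-n, n]`. -/
def BishopContinuous (φ : ℝ → ℝ) : Prop :=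
  ∀ n : ℕ, 0 < n → ∀ ε : ℝ, 0 < ε → ∃ δ : ℝ, 0 < δ ∧
    ∀ x y : ℝ, |x| ≤ (n : ℝ) → |y| ≤ (n : ℝ) → |x - y| < δ → |φ x - φ y| ≤ ε

/-- A Bishop space: a set `X` together with a Bishop topology `F ⊆ 𝔽(X)`. -/
structure BishopSpace : Type 1 where
  X : Type
  F : Set (X → ℝ)
  const_mem : ∀ a : ℝ, (fun _ => a) ∈ F
  add_mem : ∀ {f g : X → ℝ}, f ∈ F → g ∈ F → (fun x => f x + g x) ∈ F
  comp_mem : ∀ {f : X → ℝ}, f ∈ F → ∀ {φ : ℝ → ℝ}, BishopContinuous φ → (φ ∘ f) ∈ F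
  unif_closed : ∀ {f : X → ℝ},
    (∀ ε : ℝ, 0 < ε → ∃ g ∈ F, ∀ x, |g x - f x| ≤ ε) → f ∈ F

/-- The category `Bis` of Bishop spaces and Bishop morphisms. -/
instance : Category BishopSpace where
  Hom A B := {h : A.X → B.X // ∀ g ∈ B.F, g ∘ h ∈ A.F}
  id A := ⟨id, fun _ hg => hg⟩
  comp φ θ := ⟨θ.1 ∘ φ.1, fun g hg => φ.2 _ (θ.2 g hg)⟩
  id_comp φ := Subtype.ext rfl
  comp_id φ := Subtype.ext rfl
  assoc φ θ ρ := Subtype.ext rfl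

/-- The functor `Bis → Chu(Set, ℝ)`: `(X, F) ↦ (X, ev_{X,F}, F)` with
`ev_{X,F}(x, f) = f(x)`, and `h ↦ (h, h*)` with `h*(g) = g ∘ h`. -/
def EBis : BishopSpace ⥤ ChuSet ℝ where
  obj A := ⟨A.X, {f : A.X → ℝ // f ∈ A.F}, fun x f => f.1 x⟩
  map {A B} h := ⟨h.1, fun g => ⟨g.1 ∘ h.1, h.2 g.1 g.2⟩, fun _ _ => rfl⟩
  map_id A := ChuSetHom.ext rfl rfl
  map_comp φ θ := ChuSetHom.ext rfl rfl


private lemma cast_eval {α : Type} {T1 T2 : Type} (e : T1 = T2)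
    (f1 : α → T1 → ℝ) (f2 : α → T2 → ℝ) (h : HEq f1 f2) (x : α) (s : T1) :
    f1 x s = f2 x (cast e s) := by
  subst e; rw [eq_of_heq h]; rfl

private lemma mem_of_obj_eq {X : Type} {F1 F2 : Set (X → ℝ)}
    (e : {f : X → ℝ // f ∈ F1} = {f : X → ℝ // f ∈ F2})
    (hf : HEq (fun (x : X) (f : {f : X → ℝ // f ∈ F1}) => f.1 x)
              (fun (x : X) (f : {f : X → ℝ // f ∈ F2}) => f.1 x))
    {g : X → ℝ} (hg : g ∈ F1) : g ∈ F2 := by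
  have key : ∀ x, g x = (cast e ⟨g, hg⟩).1 x := fun x =>
    cast_eval e _ _ hf x ⟨g, hg⟩
  have : g = (cast e ⟨g, hg⟩).1 := funext key
  rw [this]
  exact (cast e ⟨g, hg⟩).2

/-- the functor `Bis → Chu(Set, ℝ)` above is full, faithful, and
injective on objects and on arrows. -/
theorem EBis_full_embedding :
    EBis.Full ∧ EBis.Faithful ∧ Function.Injective EBis.obj ∧
      (∀ A B : BishopSpace, Function.Injective fun h : A ⟶ B => EBis.map h) := by
  refine ⟨⟨fun {A B} φ => ?_⟩, ⟨fun {A B} h h' e => Subtype.ext (congrArg ChuSetHom.plus e)⟩,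
    ?_, fun A B h h' e => Subtype.ext (congrArg ChuSetHom.plus e)⟩
  · -- fullness
    have hmor : ∀ g ∈ B.F, g ∘ φ.plus ∈ A.F := by
      intro g hg
      have : g ∘ φ.plus = (φ.minus ⟨g, hg⟩).1 := by
        funext a; exact (φ.comm a ⟨g, hg⟩).symm
      rw [this]; exact (φ.minus ⟨g, hg⟩).2
    refine ⟨⟨φ.plus, hmor⟩, ?_⟩
    refine ChuSetHom.ext rfl ?_
    funext d
    exact Subtype.ext (funext fun a => (φ.comm a d).symm)
  · -- injectivity on objects
    intro A B h
    obtain ⟨X1, F1, c1, a1, m1, u1⟩ := A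
    obtain ⟨X2, F2, c2, a2, m2, u2⟩ := B
    simp only [EBis] at h
    injection h with hX hT hf
    subst hX
    have hF : F1 = F2 := Set.ext fun g =>
      ⟨fun hg => mem_of_obj_eq hT hf hg, fun hg => mem_of_obj_eq hT.symm hf.symm hg⟩
    subst hF
    rfl
end

section
/- The functor from the category crTop of completely regular topological spaces to Chu(Set, ℝ), sending (X, T) to (X, ev_X, C(X)) with ev_X(x, f) = f(x) and a continuous h to (h, h* : g ↦ g ∘ h), is full and faithful: in particular, if (φ⁺, φ⁻) is a Chu transform (X, ev_X, C(X)) → (Y, ev_Y, C(Y)) between completely regular spaces, then φ⁺ is continuous and φ⁻(g) = g ∘ φ⁺ for all g ∈ C(Y). -/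
open CategoryTheory

universe u

/-- The category `crTop` of completely regular (Tychonoff) topological spaces,
as the full subcategory of `Top`. -/
abbrev CRTop : Type 1 := ObjectProperty.FullSubcategory (fun X : TopCat.{0} => T35Space ↥X)

/-- The functor `crTop → Chu(Set, ℝ)`: `(X, T) ↦ (X, ev_X, C(X))` with
`ev_X(x, f) = f(x)`, and a continuous map `h ↦ (h, h* : g ↦ g ∘ h)`. -/
def ECRTop : CRTop ⥤ ChuSet ℝ where
  obj X := ⟨↥X.obj, C(↥X.obj, ℝ), fun x f => f x⟩
  map {X Y} h :=
    let h' : X.obj ⟶ Y.obj := h.hom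
    ⟨⇑h', fun g => g.comp h'.hom, fun _ _ => rfl⟩
  map_id X := ChuSetHom.ext rfl rfl
  map_comp φ θ := ChuSetHom.ext rfl rfl

open unitInterval in
lemma cont_of_comps {X Y : Type} [TopologicalSpace X] [TopologicalSpace Y]
    [T35Space Y] (p : X → Y) (h : ∀ g : C(Y, ℝ), Continuous (g ∘ p)) :
    Continuous p := by
  rw [continuous_def]
  intro U hU
  rw [isOpen_iff_mem_nhds]
  intro x hx
  obtain ⟨f, cf, hf0, hf1⟩ := CompletelyRegularSpace.completely_regular (p x) Uᶜ
    hU.isClosed_compl (by simpa using hx)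
  set g : C(Y, ℝ) := ⟨fun y => (f y : ℝ), continuous_subtype_val.comp cf⟩
  have : {z : X | g (p z) < 1/2} ⊆ p ⁻¹' U := by
    intro z hz
    by_contra hzu
    have := hf1 (by simpa using hzu)
    simp only [g, ContinuousMap.coe_mk, Set.mem_setOf_eq, this, Pi.one_apply,
      Set.Icc.coe_one] at hz
    norm_num at hz
  refine Filter.mem_of_superset ?_ this
  have : Continuous fun z => g (p z) := h g
  have ho : IsOpen {z : X | g (p z) < 1/2} := isOpen_lt this continuous_const
  exact ho.mem_nhds (by simp [g, hf0])

/-- the functor `crTop → Chu(Set, ℝ)` above is full and faithful;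
in particular, every Chu transform `(φ⁺, φ⁻) : (X, ev_X, C(X)) → (Y, ev_Y, C(Y))`
between completely regular spaces has `φ⁺` continuous and `φ⁻(g) = g ∘ φ⁺` for
all `g ∈ C(Y)`. -/
theorem ECRTop_full_faithful :
    ECRTop.Full ∧ ECRTop.Faithful ∧
      (∀ (X Y : CRTop) (φ : ECRTop.obj X ⟶ ECRTop.obj Y),
        ∀ (p : ↥X.obj → ↥Y.obj) (m : C(↥Y.obj, ℝ) → C(↥X.obj, ℝ)),
          p = φ.plus → m = φ.minus →
            Continuous p ∧ ∀ (g : C(↥Y.obj, ℝ)) (x : ↥X.obj), m g x = g (p x)) := by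
  have key : ∀ (X Y : CRTop) (φ : ECRTop.obj X ⟶ ECRTop.obj Y)
      (p : ↥X.obj → ↥Y.obj), p = φ.plus → Continuous p := by
    intro X Y φ p hp
    haveI := Y.property
    refine cont_of_comps p fun g => ?_
    let m' : C(↥X.obj, ℝ) := φ.minus g
    have : ∀ a, g (p a) = m' a := fun a => by
      rw [hp]; exact (φ.comm a g).symm
    exact (continuous_congr this).mpr m'.continuous
  refine ⟨⟨fun {X Y} φ => ?_⟩, ⟨fun {X Y} f g h => ?_⟩, fun X Y φ p m hp hm => ?_⟩
  · let p' : ↥X.obj → ↥Y.obj := φ.plus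
    refine ⟨ObjectProperty.homMk (TopCat.ofHom (ContinuousMap.mk p' (key X Y φ p' rfl) : C(↥X.obj, ↥Y.obj))), ?_⟩
    refine ChuSetHom.ext rfl (funext fun g => ?_)
    show ContinuousMap.comp g _ = φ.minus g
    exact ContinuousMap.ext fun x => (φ.comm x g).symm
  · exact ObjectProperty.hom_ext (h := TopCat.ext fun x => congrFun (congrArg ChuSetHom.plus h) x)
  · subst hp hm
    exact ⟨key X Y φ φ.plus rfl, fun g x => φ.comm x g⟩
end

section
/- For a cartesian closed category C and object γ, the functor from the subobject category Sub(C, γ) to Chu(C, γ), sending a monomorphism i : a ↪ γ to (a, i ∘ pr_a, 1) where pr_a : a × 1 → a is the projection and 1 is terminal, and a morphism f : i → j to (f, 1_1), is a full embedding. -/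
open CategoryTheory CategoryTheory.Limits MonoidalCategory

universe v u

variable (C : Type u) [Category.{v} C] [CartesianMonoidalCategory C] [MonoidalClosed C]

variable {C}

open MonoidalCategory CartesianMonoidalCategory

/-- A subobject of `γ`: an object `a` together with a monomorphism `i : a ↪ γ`. -/
structure SubObj (γ : C) : Type (max u v) where
  a : C
  i : a ⟶ γ
  mono : Mono i

/-- The (thin) category `Sub(C, γ)` of subobjects of `γ`: a morphism `i → j` is a
morphism `f : a → b` with `j ∘ f = i`. -/
instance subObjCategory {γ : C} : Category (SubObj γ) where
  Hom A B := {f : A.a ⟶ B.a // f ≫ B.i = A.i}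
  id A := ⟨𝟙 A.a, Category.id_comp _⟩
  comp f g := ⟨f.1 ≫ g.1, by rw [Category.assoc, g.2, f.2]⟩
  id_comp f := Subtype.ext (Category.id_comp _)
  comp_id f := Subtype.ext (Category.comp_id _)
  assoc f g h := Subtype.ext (Category.assoc _ _ _)

/-- The functor `Sub(C, γ) → Chu(C, γ)` sending `i : a ↪ γ` to `(a, i ∘ pr_a, 1)`
(with `1` the terminal object, i.e. the monoidal unit, and `pr_a : a × 1 → a` the
projection), and `f : i → j` to `(f, 1_1)`. -/
def ESubObj (γ : C) : SubObj γ ⥤ ChuObj C γ where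
  obj A := ⟨A.a, 𝟙_ C, fst A.a (𝟙_ C) ≫ A.i⟩
  map {A B} f := ⟨f.1, 𝟙 (𝟙_ C), by
    show (𝟙 A.a ⊗ₘ 𝟙 (𝟙_ C)) ≫ (fst A.a (𝟙_ C) ≫ A.i) = (f.1 ⊗ₘ 𝟙 (𝟙_ C)) ≫ (fst B.a (𝟙_ C) ≫ B.i)
    rw [id_tensorHom_id, Category.id_comp, ← Category.assoc, tensorHom_fst, Category.assoc, f.2]⟩
  map_id A := ChuHom.ext rfl rfl
  map_comp f g := ChuHom.ext rfl (Category.id_comp (𝟙 (𝟙_ C))).symm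

/-! The dual component of every object in the image of `ESubObj γ` is the terminal object `1`,
so a Chu transform between two such objects has a trivial `minus` part and is determined by
its `plus` part `f`. Its adjointness condition reads `i ∘ pr_a = j ∘ f ∘ pr_a`, and since
`pr_a : a × 1 → a` is an isomorphism (the right unitor), this is exactly `j ∘ f = i`. -/

section

variable {D : Type*} [Category D] [CartesianMonoidalCategory D]

lemma cancel_fst_tensorUnit {X Y : D} {f g : X ⟶ Y} :
    fst X (𝟙_ D) ≫ f = fst X (𝟙_ D) ≫ g ↔ f = g := by
  rw [← rightUnitor_hom, cancel_epi]

lemma ESubObj_obj_injective (γ : D) : Function.Injective (ESubObj γ).obj := by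
  rintro ⟨a, i, _⟩ ⟨b, j, _⟩ h
  obtain ⟨rfl, -, hf⟩ := ChuObj.mk.inj h
  obtain rfl : i = j := cancel_fst_tensorUnit.1 (eq_of_heq hf)
  rfl

variable {γ : D}

lemma ESubObj_hom_plus_comp {A B : SubObj γ} (φ : (ESubObj γ).obj A ⟶ (ESubObj γ).obj B) :
    φ.plus ≫ B.i = A.i := by
  have h := φ.comm
  dsimp only [ESubObj] at h
  rw [← Category.assoc, ← Category.assoc, tensorHom_fst, tensorHom_fst, Category.comp_id,
    Category.assoc] at h
  exact (cancel_fst_tensorUnit.1 h).symm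

lemma ESubObj_hom_ext {A B : SubObj γ} {φ ψ : (ESubObj γ).obj A ⟶ (ESubObj γ).obj B}
    (h : φ.plus = ψ.plus) : φ = ψ :=
  ChuHom.ext h (toUnit_unique _ _)

instance : (ESubObj γ).Faithful where
  map_injective h := Subtype.ext (congrArg ChuHom.plus h)

instance : (ESubObj γ).Full where
  map_surjective φ := ⟨⟨φ.plus, ESubObj_hom_plus_comp φ⟩, ESubObj_hom_ext rfl⟩

end

/-- for a ccc `C` and an object `γ`, the functor
`Sub(C, γ) → Chu(C, γ)`, `i ↦ (a, i ∘ pr_a, 1)`, `f ↦ (f, 1_1)`, is a full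
embedding: full, faithful and injective on objects. -/
theorem ESubObj_full_embedding (γ : C) :
    (ESubObj (C := C) γ).Full ∧ (ESubObj (C := C) γ).Faithful ∧
      Function.Injective (ESubObj (C := C) γ).obj :=
  ⟨inferInstance, inferInstance, ESubObj_obj_injective γ⟩
end
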